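/- arXiv:math/0307093 — 3 statements merged into one kernel-verified Lean document; each statement's English description precedes it below -/
import Mathlib

section
/- Let n ≥ 1, p > 0, q > 0, and let u be a measurable solution of u(x) = ∫_{ℝⁿ} |x-y|^p u(y)^{-q} dy, finite somewhere. Then there exists C ≥ 1 such that (1+|x|^p)/C ≤ u(x) ≤ C(1+|x|^p) for all x ∈ ℝⁿ. -/
/-!
If `u = ∞` almost everywhere, the equation gives `u ≡ 0`; hence `u` is bounded by some `k` on a
bounded set `A` of positive measure. Then `u x ≥ k ^ (-q) * ∫_A |x - z| ^ p dz`, and removing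
from `A` a ball around `x` small enough to carry at most half of its measure shows that this
integral is `≳ 1 + |x| ^ p`.
In particular `u` is bounded below, so `∫ u ^ (-q)` is finite (near a point `x₀` where `u` is
finite use the lower bound, away from it use `|x₀ - y| ^ p ≥ 1` and `u x₀ < ∞`), and the
quasi-triangle inequality `|x - y| ^ p ≤ 2 ^ p (|x - x₀| ^ p + |x₀ - y| ^ p)` gives
`u x ≤ 2 ^ p (|x - x₀| ^ p ∫ u ^ (-q) + u x₀)`.
-/

open MeasureTheory Metric
open scoped ENNReal

lemma ENNReal.ofReal_norm_sub_rpow_le {E : Type*} [SeminormedAddGroup E] (x y z : E) {p : ℝ}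
    (hp : 0 ≤ p) :
    ENNReal.ofReal ‖x - y‖ ^ p ≤
      2 ^ p * (ENNReal.ofReal ‖x - z‖ ^ p + ENNReal.ofReal ‖z - y‖ ^ p) := by
  refine (ENNReal.rpow_le_rpow ?_ hp).trans
    (ENNReal.add_rpow_le_two_rpow_mul_rpow_add_rpow _ _ hp)
  rw [← ENNReal.ofReal_add (norm_nonneg _) (norm_nonneg _)]
  exact ENNReal.ofReal_le_ofReal (norm_sub_le_norm_sub_add_norm_sub x z y)

lemma div_mul_one_add_norm_le_norm_sub {E : Type*} [SeminormedAddGroup E] {y z : E} {t R : ℝ}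
    (ht : 0 ≤ t) (hz : ‖z‖ ≤ R) (hyz : t ≤ ‖y - z‖) :
    t / (1 + R + t) * (1 + ‖y‖) ≤ ‖y - z‖ := by
  have hR : 0 ≤ R := (norm_nonneg z).trans hz
  rw [div_mul_eq_mul_div, div_le_iff₀ (by positivity)]
  nlinarith [norm_le_norm_sub_add y z]

lemma Real.one_add_rpow_le_two_mul_one_add_rpow {s p : ℝ} (hs : 0 ≤ s) (hp : 0 ≤ p) :
    1 + s ^ p ≤ 2 * (1 + s) ^ p := by
  have h1 : 1 ≤ (1 + s) ^ p := Real.one_le_rpow (by linarith) hp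
  have h2 : s ^ p ≤ (1 + s) ^ p := Real.rpow_le_rpow hs (by linarith) hp
  linarith

lemma ENNReal.rpow_neg_le_rpow_neg {a b : ℝ≥0∞} {q : ℝ} (hq : 0 ≤ q) (h : a ≤ b) :
    b ^ (-q) ≤ a ^ (-q) := by
  simpa only [ENNReal.rpow_neg] using ENNReal.inv_le_inv.2 (ENNReal.rpow_le_rpow h hq)

lemma ENNReal.mul_add_le_add_mul_one_add (a b d : ℝ≥0∞) : a * b + d ≤ (b + d) * (1 + a) := by
  rw [add_mul, mul_add, mul_add, mul_one, mul_one, mul_comm b a]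
  gcongr ?_ + ?_
  · exact le_add_self
  · exact le_self_add

lemma exists_one_le_ofReal_div_le_and_le_ofReal_mul {α : Type*} {w : α → ℝ} {u : α → ℝ≥0∞}
    {c C : ℝ≥0∞} (hw : ∀ x, 0 ≤ w x) (hc0 : c ≠ 0) (hc : c ≠ ∞) (hC : C ≠ ∞)
    (hlow : ∀ x, c * ENNReal.ofReal (w x) ≤ u x) (hup : ∀ x, u x ≤ C * ENNReal.ofReal (w x)) :
    ∃ D : ℝ, 1 ≤ D ∧ ∀ x, ENNReal.ofReal (w x / D) ≤ u x ∧ u x ≤ ENNReal.ofReal (D * w x) := by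
  have hc_pos : 0 < c.toReal := ENNReal.toReal_pos hc0 hc
  set D := max 1 (max c.toReal⁻¹ C.toReal)
  have hD : 0 < D := lt_max_of_lt_left one_pos
  have hDc : D⁻¹ ≤ c.toReal :=
    (inv_le_comm₀ hD hc_pos).2 ((le_max_left _ _).trans (le_max_right _ _))
  refine ⟨D, le_max_left _ _, fun x => ⟨?_, ?_⟩⟩
  · calc ENNReal.ofReal (w x / D) ≤ ENNReal.ofReal (c.toReal * w x) := by
          rw [div_eq_inv_mul]
          exact ENNReal.ofReal_le_ofReal (mul_le_mul_of_nonneg_right hDc (hw x))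
      _ = c * ENNReal.ofReal (w x) := by
          rw [ENNReal.ofReal_mul hc_pos.le, ENNReal.ofReal_toReal hc]
      _ ≤ u x := hlow x
  · calc u x ≤ C * ENNReal.ofReal (w x) := hup x
      _ = ENNReal.ofReal (C.toReal * w x) := by
          rw [ENNReal.ofReal_mul ENNReal.toReal_nonneg, ENNReal.ofReal_toReal hC]
      _ ≤ ENNReal.ofReal (D * w x) :=
          ENNReal.ofReal_le_ofReal (mul_le_mul_of_nonneg_right
            ((le_max_right _ _).trans (le_max_right _ _)) (hw x))

section AddHaar

variable {E : Type*} [NormedAddCommGroup E] [NormedSpace ℝ E] [MeasurableSpace E] [BorelSpace E]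
  [FiniteDimensional ℝ E] [Nontrivial E] (μ : Measure E) [μ.IsAddHaarMeasure]

lemma exists_pos_forall_measure_ball_le {ε : ℝ≥0∞} (hε : 0 < ε) :
    ∃ t > 0, ∀ y, μ (ball y t) ≤ ε := by
  have h := tendsto_measure_cthickening_of_isCompact (μ := μ) (isCompact_singleton (x := (0 : E)))
  rw [measure_singleton] at h
  obtain ⟨δ, hδ, hsmall⟩ := Metric.eventually_nhds_iff.1 (h.eventually (ge_mem_nhds hε))
  refine ⟨δ / 2, half_pos hδ, fun y => ?_⟩
  calc μ (ball y (δ / 2)) = μ (ball 0 (δ / 2)) := Measure.addHaar_ball_center μ y _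
    _ ≤ μ (cthickening (δ / 2) {0}) := by
        rw [cthickening_singleton _ (half_pos hδ).le]
        exact measure_mono ball_subset_closedBall
    _ ≤ ε := hsmall (by rw [Real.dist_eq, sub_zero, abs_of_pos (half_pos hδ)]; linarith)

lemma exists_pos_forall_half_le_measure_diff_ball {A : Set E} (h0 : μ A ≠ 0) (htop : μ A ≠ ∞) :
    ∃ t > 0, ∀ y, μ A / 2 ≤ μ (A \ ball y t) := by
  have hhalf : μ A / 2 ≠ ∞ := ENNReal.div_ne_top htop two_ne_zero
  obtain ⟨t, ht, hball⟩ := exists_pos_forall_measure_ball_le μ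
    (ENNReal.half_pos h0 : 0 < μ A / 2)
  refine ⟨t, ht, fun y => ENNReal.le_of_add_le_add_left hhalf ?_⟩
  calc μ A / 2 + μ A / 2 = μ A := ENNReal.add_halves _
    _ = μ (A ∩ ball y t) + μ (A \ ball y t) := (measure_inter_add_sdiff _ measurableSet_ball).symm
    _ ≤ μ A / 2 + μ (A \ ball y t) := by
        gcongr
        exact (measure_mono Set.inter_subset_right).trans (hball y)

lemma exists_mul_ofReal_one_add_rpow_le_setLIntegral {A : Set E} (hA : Bornology.IsBounded A)
    (h0 : μ A ≠ 0) {p : ℝ} (hp : 0 ≤ p) :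
    ∃ c : ℝ≥0∞, c ≠ 0 ∧ c ≠ ∞ ∧ ∀ y,
      c * ENNReal.ofReal (1 + ‖y‖ ^ p) ≤ ∫⁻ z in A, ENNReal.ofReal ‖y - z‖ ^ p ∂μ := by
  obtain ⟨R, hR, hAR⟩ := hA.subset_closedBall_lt 0 0
  have htop : μ A ≠ ∞ := (measure_mono hAR).trans_lt measure_closedBall_lt_top |>.ne
  obtain ⟨t, ht, hdiff⟩ := exists_pos_forall_half_le_measure_diff_ball μ h0 htop
  set κ := t / (1 + R + t)
  have hκ : 0 < κ := by positivity
  refine ⟨μ A / 2 * ENNReal.ofReal (κ ^ p / 2), ?_, ?_, fun y => ?_⟩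
  · exact mul_ne_zero (ENNReal.half_pos h0).ne' (by simp; positivity)
  · exact ENNReal.mul_ne_top (ENNReal.div_ne_top htop two_ne_zero) ENNReal.ofReal_ne_top
  have hnear : ∀ z ∈ A \ ball y t,
      ENNReal.ofReal ((κ * (1 + ‖y‖)) ^ p) ≤ ENNReal.ofReal ‖y - z‖ ^ p := by
    rintro z ⟨hzA, hzt⟩
    rw [mem_ball', not_lt, dist_eq_norm] at hzt
    rw [← ENNReal.ofReal_rpow_of_nonneg (by positivity) hp]
    exact ENNReal.rpow_le_rpow (ENNReal.ofReal_le_ofReal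
      (div_mul_one_add_norm_le_norm_sub ht.le (mem_closedBall_zero_iff.1 (hAR hzA)) hzt)) hp
  calc μ A / 2 * ENNReal.ofReal (κ ^ p / 2) * ENNReal.ofReal (1 + ‖y‖ ^ p)
      = μ A / 2 * ENNReal.ofReal (κ ^ p / 2 * (1 + ‖y‖ ^ p)) := by
        rw [mul_assoc, ← ENNReal.ofReal_mul (by positivity)]
    _ ≤ μ (A \ ball y t) * ENNReal.ofReal ((κ * (1 + ‖y‖)) ^ p) := by
        gcongr ?_ * ENNReal.ofReal ?_
        · exact hdiff y
        rw [Real.mul_rpow hκ.le (by positivity)]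
        have := Real.one_add_rpow_le_two_mul_one_add_rpow (norm_nonneg y) hp
        have : 0 ≤ κ ^ p := by positivity
        nlinarith
    _ = ∫⁻ _ in A \ ball y t, ENNReal.ofReal ((κ * (1 + ‖y‖)) ^ p) ∂μ := by
        rw [setLIntegral_const, mul_comm]
    _ ≤ ∫⁻ z in A \ ball y t, ENNReal.ofReal ‖y - z‖ ^ p ∂μ :=
        setLIntegral_mono (by fun_prop) hnear
    _ ≤ ∫⁻ z in A, ENNReal.ofReal ‖y - z‖ ^ p ∂μ := lintegral_mono_set Set.sdiff_subset

end AddHaar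

def SolvesIntegralEq {E : Type*} [NormedAddCommGroup E] [MeasurableSpace E] (μ : Measure E)
    (p q : ℝ) (u : E → ℝ≥0∞) : Prop :=
  ∀ x, u x = ∫⁻ y, ENNReal.ofReal ‖x - y‖ ^ p * u y ^ (-q) ∂μ

lemma exists_measure_le_inter_closedBall_ne_zero {E : Type*} [NormedAddCommGroup E]
    [MeasurableSpace E] {μ : Measure E} {u : E → ℝ≥0∞} (h : μ {x | u x ≠ ∞} ≠ 0) :
    ∃ k : ℕ, μ ({x | u x ≤ k} ∩ closedBall 0 k) ≠ 0 := by
  by_contra! hnull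
  refine h (measure_mono_null (fun x (hx : u x ≠ ∞) => ?_) (measure_iUnion_null hnull))
  obtain ⟨m, hm⟩ := ENNReal.exists_nat_gt hx
  obtain ⟨m', hm'⟩ := exists_nat_ge ‖x‖
  refine Set.mem_iUnion.2 ⟨max m m', ?_, ?_⟩
  · exact hm.le.trans (by exact_mod_cast le_max_left m m')
  · exact mem_closedBall_zero_iff.2 (hm'.trans (by exact_mod_cast le_max_right m m'))

namespace SolvesIntegralEq

section

variable {E : Type*} [NormedAddCommGroup E] [MeasurableSpace E] {μ : Measure E} {p q : ℝ}
  {u : E → ℝ≥0∞}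

lemma measure_ne_top_ne_zero (hsol : SolvesIntegralEq μ p q u) (hq : 0 < q)
    (hpos : ∀ x, 0 < u x) : μ {x | u x ≠ ∞} ≠ 0 := by
  intro h0
  have hae : ∀ᵐ y ∂μ, u y = ∞ := by rw [ae_iff]; simpa using h0
  refine (hpos 0).ne' ?_
  calc u 0 = ∫⁻ y, ENNReal.ofReal ‖0 - y‖ ^ p * u y ^ (-q) ∂μ := hsol 0
    _ = ∫⁻ _, 0 ∂μ := lintegral_congr_ae <| hae.mono fun y hy => by
        simp [hy, ENNReal.top_rpow_of_neg (neg_neg_of_pos hq)]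
    _ = 0 := lintegral_zero

lemma le_two_rpow_mul (hsol : SolvesIntegralEq μ p q u) (hp : 0 ≤ p) (hu : Measurable u)
    (x x₀ : E) :
    u x ≤ 2 ^ p * (ENNReal.ofReal ‖x - x₀‖ ^ p * ∫⁻ y, u y ^ (-q) ∂μ + u x₀) := by
  calc u x = ∫⁻ y, ENNReal.ofReal ‖x - y‖ ^ p * u y ^ (-q) ∂μ := hsol x
    _ ≤ ∫⁻ y, 2 ^ p * (ENNReal.ofReal ‖x - x₀‖ ^ p * u y ^ (-q)
          + ENNReal.ofReal ‖x₀ - y‖ ^ p * u y ^ (-q)) ∂μ := by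
        refine lintegral_mono fun y => ?_
        rw [← add_mul, ← mul_assoc]
        gcongr
        exact ENNReal.ofReal_norm_sub_rpow_le x y x₀ hp
    _ = 2 ^ p * (ENNReal.ofReal ‖x - x₀‖ ^ p * ∫⁻ y, u y ^ (-q) ∂μ + u x₀) := by
        rw [lintegral_const_mul' _ _ (ENNReal.rpow_ne_top_of_nonneg hp ENNReal.ofNat_ne_top),
          lintegral_add_left (by fun_prop),
          lintegral_const_mul' _ _ (ENNReal.rpow_ne_top_of_nonneg hp ENNReal.ofReal_ne_top),
          ← hsol x₀]

variable [ProperSpace E] [BorelSpace E] [IsFiniteMeasureOnCompacts μ]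

lemma lintegral_rpow_neg_ne_top (hsol : SolvesIntegralEq μ p q u) (hp : 0 ≤ p) (hq : 0 < q)
    (hu : Measurable u) {c : ℝ≥0∞} (hc : c ≠ 0) (hlow : ∀ x, c ≤ u x) {x₀ : E}
    (hx₀ : u x₀ ≠ ∞) : ∫⁻ y, u y ^ (-q) ∂μ ≠ ∞ := by
  have hnear : ∫⁻ y in ball x₀ 1, u y ^ (-q) ∂μ ≤ c ^ (-q) * μ (ball x₀ 1) := by
    rw [← setLIntegral_const]
    exact setLIntegral_mono measurable_const fun y _ =>
      ENNReal.rpow_neg_le_rpow_neg hq.le (hlow y)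
  have hfar : ∫⁻ y in (ball x₀ 1)ᶜ, u y ^ (-q) ∂μ ≤ u x₀ := by
    calc ∫⁻ y in (ball x₀ 1)ᶜ, u y ^ (-q) ∂μ
        ≤ ∫⁻ y in (ball x₀ 1)ᶜ, ENNReal.ofReal ‖x₀ - y‖ ^ p * u y ^ (-q) ∂μ := by
          refine setLIntegral_mono (by fun_prop) fun y hy => le_mul_of_one_le_left' ?_
          rw [Set.mem_compl_iff, mem_ball', not_lt, dist_eq_norm] at hy
          simpa using ENNReal.rpow_le_rpow (ENNReal.one_le_ofReal.2 hy) hp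
      _ ≤ u x₀ := (hsol x₀).symm ▸ setLIntegral_le_lintegral _ _
  rw [← lintegral_add_compl _ measurableSet_ball]
  refine ENNReal.add_ne_top.2 ⟨ne_top_of_le_ne_top ?_ hnear, ne_top_of_le_ne_top hx₀ hfar⟩
  exact ENNReal.mul_ne_top (by simp [ENNReal.rpow_eq_top_iff, hc, hq.le]) measure_ball_lt_top.ne

end

section

variable {E : Type*} [NormedAddCommGroup E] [NormedSpace ℝ E] [MeasurableSpace E] [BorelSpace E]
  [FiniteDimensional ℝ E] [Nontrivial E] {μ : Measure E} [μ.IsAddHaarMeasure] {p q : ℝ}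
  {u : E → ℝ≥0∞}

lemma exists_mul_ofReal_one_add_rpow_le (hsol : SolvesIntegralEq μ p q u) (hp : 0 ≤ p)
    (hq : 0 < q) (hu : Measurable u) (hpos : ∀ x, 0 < u x) :
    ∃ c : ℝ≥0∞, c ≠ 0 ∧ c ≠ ∞ ∧ ∀ x, c * ENNReal.ofReal (1 + ‖x‖ ^ p) ≤ u x := by
  obtain ⟨k, hk⟩ := exists_measure_le_inter_closedBall_ne_zero (hsol.measure_ne_top_ne_zero hq hpos)
  set A := {x | u x ≤ k} ∩ closedBall (0 : E) k
  obtain ⟨c, hc0, hctop, hc⟩ := exists_mul_ofReal_one_add_rpow_le_setLIntegral μ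
    (isBounded_closedBall.subset Set.inter_subset_right) hk hp
  have hk0 : (k : ℝ≥0∞) ≠ 0 := by
    obtain ⟨z, hz, -⟩ := nonempty_of_measure_ne_zero hk
    exact ((hpos z).trans_le hz).ne'
  have hkq : (k : ℝ≥0∞) ^ (-q) ≠ ∞ := by simp [ENNReal.rpow_eq_top_iff, hk0]
  refine ⟨k ^ (-q) * c, mul_ne_zero (by simp [hq.le]) hc0, ENNReal.mul_ne_top hkq hctop,
    fun x => ?_⟩
  calc (k : ℝ≥0∞) ^ (-q) * c * ENNReal.ofReal (1 + ‖x‖ ^ p)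
      ≤ k ^ (-q) * ∫⁻ z in A, ENNReal.ofReal ‖x - z‖ ^ p ∂μ := by
        rw [mul_assoc]; gcongr; exact hc x
    _ = ∫⁻ z in A, ENNReal.ofReal ‖x - z‖ ^ p * k ^ (-q) ∂μ := by
        rw [lintegral_mul_const' _ _ hkq, mul_comm]
    _ ≤ ∫⁻ z in A, ENNReal.ofReal ‖x - z‖ ^ p * u z ^ (-q) ∂μ :=
        setLIntegral_mono (by fun_prop) fun z hz =>
          mul_le_mul_right (ENNReal.rpow_neg_le_rpow_neg hq.le hz.1) _
    _ ≤ u x := (hsol x).symm ▸ setLIntegral_le_lintegral _ _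

theorem exists_bounds_one_add_norm_rpow (hsol : SolvesIntegralEq μ p q u) (hp : 0 ≤ p) (hq : 0 < q)
    (hu : Measurable u) (hpos : ∀ x, 0 < u x) (hfin : ∃ x, u x ≠ ∞) :
    ∃ C : ℝ, 1 ≤ C ∧ ∀ x,
      ENNReal.ofReal ((1 + ‖x‖ ^ p) / C) ≤ u x ∧ u x ≤ ENNReal.ofReal (C * (1 + ‖x‖ ^ p)) := by
  obtain ⟨c, hc0, hctop, hlow⟩ := hsol.exists_mul_ofReal_one_add_rpow_le hp hq hu hpos
  obtain ⟨x₀, hx₀⟩ := hfin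
  have hc_le : ∀ x, c ≤ u x := fun x =>
    (le_mul_of_one_le_right' (ENNReal.one_le_ofReal.2 (by simp; positivity))).trans (hlow x)
  have hI := hsol.lintegral_rpow_neg_ne_top hp hq hu hc0 hc_le hx₀
  -- finiteness at `x₀` propagates to `0`, so that the upper bound can be centred at the origin
  have hu0 : u 0 ≠ ∞ := ne_top_of_le_ne_top (by finiteness) (hsol.le_two_rpow_mul hp hu 0 x₀)
  refine exists_one_le_ofReal_div_le_and_le_ofReal_mul (fun x => by positivity) hc0 hctop
    (C := 2 ^ p * ((∫⁻ y, u y ^ (-q) ∂μ) + u 0)) (by finiteness) hlow fun x => ?_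
  calc u x ≤ 2 ^ p * (ENNReal.ofReal ‖x‖ ^ p * ∫⁻ y, u y ^ (-q) ∂μ + u 0) := by
        simpa using hsol.le_two_rpow_mul hp hu x 0
    _ ≤ 2 ^ p * ((∫⁻ y, u y ^ (-q) ∂μ) + u 0) * ENNReal.ofReal (1 + ‖x‖ ^ p) := by
        rw [mul_assoc, ENNReal.ofReal_add zero_le_one (by positivity), ENNReal.ofReal_one,
          ← ENNReal.ofReal_rpow_of_nonneg (norm_nonneg x) hp]
        gcongr
        exact ENNReal.mul_add_le_add_mul_one_add _ _ _

end

end SolvesIntegralEq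

theorem growth_bounds (n : ℕ) (hn : 1 ≤ n) (p q : ℝ) (hp : 0 < p) (hq : 0 < q)
    (u : EuclideanSpace ℝ (Fin n) → ℝ≥0∞) (hu : Measurable u) (hupos : ∀ x, 0 < u x)
    (heq : ∀ x, u x = ∫⁻ y, (ENNReal.ofReal ‖x - y‖) ^ p * u y ^ (-q))
    (hfin : ∃ x, u x ≠ ⊤) :
    ∃ C : ℝ, 1 ≤ C ∧ ∀ x,
      ENNReal.ofReal ((1 + ‖x‖ ^ p) / C) ≤ u x ∧
      u x ≤ ENNReal.ofReal (C * (1 + ‖x‖ ^ p)) := by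
  have : NeZero n := ⟨by omega⟩
  exact SolvesIntegralEq.exists_bounds_one_add_norm_rpow heq hp.le hq hu hupos hfin
end

section
/- Let n ≥ 1, p > 0, and let u be a positive measurable function on ℝⁿ with u(x) = ∫_{ℝⁿ} |x-y|^p u(y)^{-q} dy and ∫(1+|y|^p)u(y)^{-q} dy < ∞. For x ∈ ℝⁿ, λ > 0, define u_{x,λ}(ξ) = (|ξ-x|/λ)^p u(x + λ²(ξ-x)/|ξ-x|²). Then u_{x,λ}(ξ) = ∫_{ℝⁿ} |ξ-z|^p (λ/|z-x|)^{2n-pq+p} u_{x,λ}(z)^{-q} dz for all ξ ≠ x. -/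
/-!
The map `z ↦ z^{x,λ}` is the inversion in the sphere of centre `x` and radius `λ`: an involution
of `ℝⁿ ∖ {x}` whose differential at `z` is `(λ / |z - x|)²` times a reflection, so its Jacobian is
`(λ / |z - x|)^{2n}`, and which scales distances by
`|ξ^{x,λ} - z^{x,λ}| = λ² |ξ - z| / (|ξ - x| |z - x|)`. Writing the integral equation for `u` at
`ξ^{x,λ}` and substituting `y = z^{x,λ}`, these two facts turn the kernel and the Jacobian into the
weights of the claimed identity.
-/

open MeasureTheory Module

namespace EuclideanGeometry

variable {E : Type*} [NormedAddCommGroup E] [InnerProductSpace ℝ E] {c : E} {R : ℝ}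

theorem inversion_eq_add_smul (c : E) (R : ℝ) (x : E) :
    inversion c R x = c + (R ^ 2 / ‖x - c‖ ^ 2) • (x - c) := by
  rw [inversion, dist_eq_norm, div_pow, vsub_eq_sub, vadd_eq_add, add_comm]

theorem image_inversion_compl_singleton (hR : R ≠ 0) : inversion c R '' {c}ᶜ = {c}ᶜ := by
  refine (Set.image_subset_iff.2 fun x hx => ?_).antisymm fun x hx => ?_
  · exact (inversion_eq_center hR).not.2 hx
  · exact ⟨inversion c R x, (inversion_eq_center hR).not.2 hx, inversion_inversion c hR x⟩

theorem abs_det_smul_reflection [FiniteDimensional ℝ E] (a : ℝ) (v : E) :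
    |(a • ((ℝ ∙ v)ᗮ.reflection : E →L[ℝ] E)).det| = |a| ^ finrank ℝ E := by
  rw [ContinuousLinearMap.det, ContinuousLinearMap.toLinearMap_smul, LinearMap.det_smul, abs_mul,
    abs_pow]
  erw [Submodule.det_reflection]
  rw [abs_pow, abs_neg, abs_one, one_pow, mul_one]

theorem integral_comp_inversion [FiniteDimensional ℝ E] [Nontrivial E] [MeasurableSpace E]
    [BorelSpace E] (μ : Measure E) [μ.IsAddHaarMeasure] {F : Type*} [NormedAddCommGroup F]
    [NormedSpace ℝ F] (c : E) (hR : R ≠ 0) (g : E → F) :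
    ∫ y, g y ∂μ = ∫ z, (R / dist z c) ^ (2 * finrank ℝ E) • g (inversion c R z) ∂μ := by
  have hc : MeasurableSet ({c}ᶜ : Set E) := (measurableSet_singleton c).compl
  rw [← restrict_compl_singleton (μ := μ) c, ← image_inversion_compl_singleton hR,
    integral_image_eq_integral_abs_det_fderiv_smul μ hc
      (fun z hz => (hasFDerivAt_inversion hz).hasFDerivWithinAt)
      (inversion_injective c hR).injOn, image_inversion_compl_singleton hR, restrict_compl_singleton]
  simp only [abs_det_smul_reflection, abs_sq, pow_mul]

theorem jacobian_mul_kernel_inversion {ξ z : E} (hξ : ξ ≠ c) (hz : z ≠ c) (hR : 0 < R) {v : ℝ}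
    (hv : 0 ≤ v) (N : ℕ) (p q : ℝ) :
    (R / dist z c) ^ N *
        ((dist ξ c / R) ^ p * (dist (inversion c R ξ) (inversion c R z) ^ p * v ^ (-q))) =
      dist ξ z ^ p * (R / dist z c) ^ ((N : ℝ) - p * q + p) * ((dist z c / R) ^ p * v) ^ (-q) := by
  have hξc := dist_pos.2 hξ
  have hzc := dist_pos.2 hz
  set t := R / dist z c with ht_def
  have ht : 0 < t := div_pos hR hzc
  have hscale : (dist ξ c / R) ^ p * dist (inversion c R ξ) (inversion c R z) ^ p =
      t ^ p * dist ξ z ^ p := by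
    rw [dist_inversion_inversion hξ hz, ← Real.mul_rpow (by positivity) (by positivity),
      ← Real.mul_rpow ht.le dist_nonneg, ← mul_assoc]
    congr 2
    rw [ht_def]
    field_simp
  have hweight : ((dist z c / R) ^ p * v) ^ (-q) = t ^ (p * q) * v ^ (-q) := by
    rw [Real.mul_rpow (by positivity) hv, ← Real.rpow_mul (by positivity), ← inv_div,
      Real.inv_rpow ht.le, ← Real.rpow_neg ht.le, mul_neg, neg_neg]
  have hexp : t ^ ((N : ℝ) - p * q + p) = t ^ N * t ^ p / t ^ (p * q) := by
    rw [Real.rpow_add ht, Real.rpow_sub ht, Real.rpow_natCast]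
    ring
  rw [hweight, hexp, ← mul_assoc ((dist ξ c / R) ^ p), hscale]
  field_simp

end EuclideanGeometry

open EuclideanGeometry

theorem conformal_covariance_negative_exponent_general (n : ℕ) (p q : ℝ)
    (u : EuclideanSpace ℝ (Fin n) → ℝ) (hupos : ∀ x, 0 < u x)
    (heq : ∀ x, u x = ∫ y, ‖x - y‖ ^ p * u y ^ (-q)) :
    ∀ x : EuclideanSpace ℝ (Fin n), ∀ lam : ℝ, 0 < lam → ∀ ξ, ξ ≠ x →
      (‖ξ - x‖ / lam) ^ p * u (x + (lam ^ 2 / ‖ξ - x‖ ^ 2) • (ξ - x)) =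
        ∫ z, ‖ξ - z‖ ^ p * (lam / ‖z - x‖) ^ (2 * (n : ℝ) - p * q + p) *
          ((‖z - x‖ / lam) ^ p * u (x + (lam ^ 2 / ‖z - x‖ ^ 2) • (z - x))) ^ (-q) := by
  intro x lam hlam ξ hξ
  have : Nontrivial (EuclideanSpace ℝ (Fin n)) := nontrivial_of_ne ξ x hξ
  have hdim : 2 * (n : ℝ) = ((2 * finrank ℝ (EuclideanSpace ℝ (Fin n)) : ℕ) : ℝ) := by
    rw [finrank_euclideanSpace_fin]
    push_cast
    rfl
  simp only [← inversion_eq_add_smul]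
  rw [heq, ← integral_const_mul]
  simp only [← dist_eq_norm, hdim]
  rw [integral_comp_inversion volume x hlam.ne']
  refine integral_congr_ae ((volume.ae_ne x).mono fun z hz => ?_)
  simp only [smul_eq_mul]
  exact jacobian_mul_kernel_inversion hξ hz hlam (hupos _).le _ p q

theorem conformal_covariance_negative_exponent (n : ℕ) (hn : 1 ≤ n) (p q : ℝ)
    (hp : 0 < p) (hq : 0 < q)
    (u : EuclideanSpace ℝ (Fin n) → ℝ) (hu : Measurable u) (hupos : ∀ x, 0 < u x)
    (heq : ∀ x, u x = ∫ y, ‖x - y‖ ^ p * u y ^ (-q))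
    (hfin : Integrable (fun y : EuclideanSpace ℝ (Fin n) => (1 + ‖y‖ ^ p) * u y ^ (-q))) :
    ∀ x : EuclideanSpace ℝ (Fin n), ∀ lam : ℝ, 0 < lam → ∀ ξ, ξ ≠ x →
      (‖ξ - x‖ / lam) ^ p * u (x + (lam ^ 2 / ‖ξ - x‖ ^ 2) • (ξ - x)) =
        ∫ z, ‖ξ - z‖ ^ p * (lam / ‖z - x‖) ^ (2 * (n : ℝ) - p * q + p) *
          ((‖z - x‖ / lam) ^ p * u (x + (lam ^ 2 / ‖z - x‖ ^ 2) • (z - x))) ^ (-q) :=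
  conformal_covariance_negative_exponent_general n p q u hupos heq
end

section
/- Let n ≥ 1, 0 < α < n, and let u be a positive continuous solution of u(x) = ∫_{ℝⁿ} u(y)^μ |x-y|^{α-n} dy with μ > 0, u finite everywhere. If for every x ∈ ℝⁿ and every λ > 0 one has (λ/|y-x|)^{n-α} u(x + λ²(y-x)/|y-x|²) ≤ u(y) for all |y-x| ≥ λ, then u is constant — which contradicts the equation; hence no positive solution can satisfy the moving-sphere inequality for all centers x and all radii λ. -/
/-!
Inverting in spheres centred on the line through `a` and `b`, with radius chosen so that `b` is
mapped to `a`, gives `r ^ s * u a ≤ u b` for every ratio `r < 1` of radius to distance; letting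
`r → 1` yields `u a ≤ u b`, so `u` is constant. The equation then forces
`u 0 = u 0 ^ μ * ∫ ‖y‖ ^ (α - n)`. The kernel is homogeneous of degree `α - n ≠ -n`, so the
scaling `y ↦ 2 y` shows that its integral is a different multiple of itself: it diverges, which
is `0` as a Bochner integral, contradicting `u 0 > 0`.
-/

open MeasureTheory Filter Topology

section MovingSphere

variable {E : Type*} [NormedAddCommGroup E] [NormedSpace ℝ E]

/-- The transform `u_{x,λ}` of the moving sphere method; in `ℝⁿ` with kernel `|x - y|^{α-n}`
the exponent is `s = n - α`. -/
noncomputable def kelvinTransform (s : ℝ) (u : E → ℝ) (x : E) (lam : ℝ) (y : E) : ℝ :=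
  (lam / ‖y - x‖) ^ s * u (x + (lam ^ 2 / ‖y - x‖ ^ 2) • (y - x))

theorem kelvinTransform_mul_norm (s : ℝ) (u : E → ℝ) {x y : E} (hxy : y ≠ x) (r : ℝ) :
    kelvinTransform s u x (r * ‖y - x‖) y = r ^ s * u (x + r ^ 2 • (y - x)) := by
  have hd : ‖y - x‖ ≠ 0 := norm_ne_zero_iff.2 (sub_ne_zero.2 hxy)
  rw [kelvinTransform, mul_div_cancel_right₀ r hd, mul_pow,
    mul_div_cancel_right₀ _ (pow_ne_zero 2 hd)]

theorem rpow_mul_le_of_forall_kelvinTransform_le {s : ℝ} {u : E → ℝ}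
    (hms : ∀ x lam, 0 < lam → ∀ y, lam ≤ ‖y - x‖ → kelvinTransform s u x lam y ≤ u y)
    {a b : E} (hab : a ≠ b) {r : ℝ} (hr0 : 0 < r) (hr1 : r < 1) : r ^ s * u a ≤ u b := by
  set c := (1 - r ^ 2)⁻¹
  have hc : c * (1 - r ^ 2) = 1 := inv_mul_cancel₀ (by nlinarith)
  -- the center on the line through `a` and `b` whose inversion of radius `r ‖b - x‖` maps `b` to `a`
  set x : E := c • (a - r ^ 2 • b)
  have hbx : b - x = c • (b - a) := by linear_combination (norm := module) -(hc • b)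
  have hinv : x + r ^ 2 • (b - x) = a := by
    rw [hbx]; linear_combination (norm := module) hc • a
  have hxb : b ≠ x := sub_ne_zero.1 <| by
    rw [hbx]; exact smul_ne_zero (left_ne_zero_of_mul_eq_one hc) (sub_ne_zero.2 hab.symm)
  have hpos : 0 < ‖b - x‖ := norm_pos_iff.2 (sub_ne_zero.2 hxb)
  have := hms x (r * ‖b - x‖) (by positivity) b (mul_le_of_le_one_left hpos.le hr1.le)
  rwa [kelvinTransform_mul_norm s u hxb, hinv] at this

theorem le_of_forall_kelvinTransform_le {s : ℝ} {u : E → ℝ}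
    (hms : ∀ x lam, 0 < lam → ∀ y, lam ≤ ‖y - x‖ → kelvinTransform s u x lam y ≤ u y)
    (a b : E) : u a ≤ u b := by
  rcases eq_or_ne a b with rfl | hab
  · exact le_rfl
  have hlim : Tendsto (fun r : ℝ => r ^ s * u a) (𝓝[<] 1) (𝓝 (u a)) := by
    have := ((Real.continuousAt_rpow_const 1 s (Or.inl one_ne_zero)).tendsto.mono_left
      (nhdsWithin_le_nhds (s := Set.Iio 1))).mul_const (u a)
    simpa using this
  refine le_of_tendsto hlim ?_
  filter_upwards [Ioo_mem_nhdsLT (show (0 : ℝ) < 1 by norm_num)] with r hr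
  exact rpow_mul_le_of_forall_kelvinTransform_le hms hab hr.1 hr.2

end MovingSphere

theorem integral_norm_rpow_eq_zero {E : Type*} [NormedAddCommGroup E] [NormedSpace ℝ E]
    [FiniteDimensional ℝ E] [MeasurableSpace E] [BorelSpace E] (μ : Measure E)
    [μ.IsAddHaarMeasure] {p : ℝ} (hp : p ≠ -(Module.finrank ℝ E : ℝ)) :
    ∫ x, ‖x‖ ^ p ∂μ = 0 := by
  have hscale := Measure.integral_comp_smul_of_nonneg μ (fun x : E => ‖x‖ ^ p) 2 (hR := zero_le_two)
  have hhom : ∀ x : E, ‖(2 : ℝ) • x‖ ^ p = 2 ^ p * ‖x‖ ^ p := fun x => by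
    rw [norm_smul, Real.norm_two, Real.mul_rpow zero_le_two (norm_nonneg x)]
  simp only [hhom, integral_const_mul, smul_eq_mul] at hscale
  have hne : (2 : ℝ) ^ p ≠ ((2 : ℝ) ^ Module.finrank ℝ E)⁻¹ := by
    rw [← Real.rpow_natCast, ← Real.rpow_neg zero_le_two]
    exact fun h => hp ((Real.rpow_right_inj two_pos (by norm_num)).1 h)
  by_contra hJ
  exact hne (mul_right_cancel₀ hJ hscale)

theorem no_solution_with_full_moving_sphere_general (n : ℕ) (α μ : ℝ)
    (hα0 : 0 < α)
    (u : EuclideanSpace ℝ (Fin n) → ℝ) (hupos : ∀ x, 0 < u x)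
    (heq : ∀ x, u x = ∫ y, u y ^ μ * ‖x - y‖ ^ (α - (n : ℝ)))
    (hms : ∀ x : EuclideanSpace ℝ (Fin n), ∀ lam : ℝ, 0 < lam →
      ∀ y, lam ≤ ‖y - x‖ →
        (lam / ‖y - x‖) ^ ((n : ℝ) - α) *
          u (x + (lam ^ 2 / ‖y - x‖ ^ 2) • (y - x)) ≤ u y) :
    False := by
  have hconst : ∀ y, u y = u 0 := fun y =>
    le_antisymm (le_of_forall_kelvinTransform_le hms y 0) (le_of_forall_kelvinTransform_le hms 0 y)
  have hkernel : ∫ y : EuclideanSpace ℝ (Fin n), ‖y‖ ^ (α - (n : ℝ)) = 0 :=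
    integral_norm_rpow_eq_zero volume (by simpa [finrank_euclideanSpace] using hα0.ne')
  have h0 := heq 0
  simp only [hconst, zero_sub, norm_neg, integral_const_mul, hkernel, mul_zero] at h0
  exact (hupos 0).ne' h0

theorem no_solution_with_full_moving_sphere (n : ℕ) (hn : 1 ≤ n) (α μ : ℝ)
    (hα0 : 0 < α) (hαn : α < n) (hμ : 0 < μ)
    (u : EuclideanSpace ℝ (Fin n) → ℝ) (hu : Continuous u) (hupos : ∀ x, 0 < u x)
    (heq : ∀ x, u x = ∫ y, u y ^ μ * ‖x - y‖ ^ (α - (n : ℝ)))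
    (hms : ∀ x : EuclideanSpace ℝ (Fin n), ∀ lam : ℝ, 0 < lam →
      ∀ y, lam ≤ ‖y - x‖ →
        (lam / ‖y - x‖) ^ ((n : ℝ) - α) *
          u (x + (lam ^ 2 / ‖y - x‖ ^ 2) • (y - x)) ≤ u y) :
    False :=
  no_solution_with_full_moving_sphere_general n α μ hα0 u hupos heq hms
end
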